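/- arXiv:2407.01363 — 4 statements merged into one kernel-verified Lean document; each statement's English description precedes it below -/
import Mathlib

section
/- Let B be a valid bid, so B ≥ α. For every l ≥ 0, the stated valuation is strictly below the hidden valuation, ṽ(B,l) < v̲(l), if and only if B < α + μ and l > (C + μ·l_0)/(α + μ − B). -/
/-- Hidden valuation of a driver for a sensing task at distance `l`. -/
noncomputable def vLow (α μ l₀ l : ℝ) : ℝ :=
  if l ≤ l₀ then α * l else α * l₀ + (α + μ) * (l - l₀)

/-- Stated valuation given a bid `B` (price per unit distance). -/
def vStated (C B l : ℝ) : ℝ := C + B * l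

/-- For a valid bid `B ≥ α` and every `l ≥ 0`, the stated valuation is
strictly below the hidden valuation iff `B < α + μ` and `l > (C + μ·l₀)/(α + μ − B)`. -/
theorem stmt_1 (α μ C l₀ B : ℝ) (hα : 0 < α) (hμ : 0 < μ) (hC : 0 < C)
    (hl₀ : 0 < l₀) (hB : α ≤ B) :
    ∀ l : ℝ, 0 ≤ l →
      (vStated C B l < vLow α μ l₀ l ↔
        B < α + μ ∧ (C + μ * l₀) / (α + μ - B) < l) := by
  intro l hl
  unfold vStated vLow
  constructor
  · intro h
    by_cases hle : l ≤ l₀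
    · simp only [if_pos hle] at h
      nlinarith
    · simp only [if_neg hle] at h
      push_neg at hle
      have hd : 0 < α + μ - B := by nlinarith
      refine ⟨by linarith, ?_⟩
      rw [div_lt_iff₀ hd]
      nlinarith
  · rintro ⟨hBlt, hlt⟩
    have hd : 0 < α + μ - B := by linarith
    rw [div_lt_iff₀ hd] at hlt
    have hl₀lt : l₀ < l := by nlinarith
    simp only [if_neg (not_le.mpr hl₀lt)]
    nlinarith
end

section
/- (Incentive Compatibility of the VCG-MST mechanism.) Fix a driver d ∈ D and suppose the reported valuation v̂ agrees with the true valuation v on every pair whose driver is not d. Let M̂ be a matching attaining the optimum Π(v̂) for the reported cost savings, and suppose (d, k̂) ∈ M̂. Then v̂(d,k̂) + Π(v̂) − v(d,k̂) ≤ Π(v). Equivalently, subtracting Π_{-d} (the optimum over D \ {d}, which does not depend on d's report) from both sides, the misreporting driver's utility v̂(d,k̂) + (Π(v̂) − Π_{-d}) − v(d,k̂) is at most the truthful utility Π(v) − Π_{-d}; truthful bidding is a dominant strategy. -/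
/-- A matching between drivers and tasks: each driver appears in at most one pair
and each task appears in at most one pair. -/
def IsMatching {D K : Type*} (M : Finset (D × K)) : Prop :=
  ∀ p ∈ M, ∀ q ∈ M, (p.1 = q.1 ∨ p.2 = q.2) → p = q

/-- Incentive Compatibility of VCG-MST: Fix a driver `d` and suppose
the reported valuation `v̂` agrees with the true valuation `v` off `d`. If `M̂`
attains the optimum `Π(v̂)` of the reported cost savings `δ_{v̂}(d,k) = c(k) − v̂(d,k)`
and `(d, k̂) ∈ M̂`, then `v̂(d,k̂) + Π(v̂) − v(d,k̂) ≤ Π(v)`; subtracting `Π_{-d}`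
(which does not depend on `d`'s report) from both sides, the misreporting utility is
at most the truthful utility. -/
theorem stmt_8 {D K : Type*} [Fintype D] [Fintype K]
    (c : K → ℝ) (v vhat : D × K → ℝ) (d : D) (khat : K)
    (hagree : ∀ p : D × K, p.1 ≠ d → vhat p = v p)
    (Mhat : Finset (D × K)) (hMhat : IsMatching Mhat) (hdk : (d, khat) ∈ Mhat)
    (Pihat Piv Piminus : ℝ)
    (hhat_att : ∑ p ∈ Mhat, (c p.2 - vhat p) = Pihat)
    (hhat_ub : ∀ M : Finset (D × K), IsMatching M →
      ∑ p ∈ M, (c p.2 - vhat p) ≤ Pihat)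
    (hv_ub : ∀ M : Finset (D × K), IsMatching M →
      ∑ p ∈ M, (c p.2 - v p) ≤ Piv)
    (hv_att : ∃ M : Finset (D × K), IsMatching M ∧ ∑ p ∈ M, (c p.2 - v p) = Piv)
    (hminus_ub : ∀ M : Finset (D × K), IsMatching M → (∀ p ∈ M, p.1 ≠ d) →
      ∑ p ∈ M, (c p.2 - v p) ≤ Piminus)
    (hminus_att : ∃ M : Finset (D × K), IsMatching M ∧ (∀ p ∈ M, p.1 ≠ d) ∧
      ∑ p ∈ M, (c p.2 - v p) = Piminus) :
    vhat (d, khat) + Pihat - v (d, khat) ≤ Piv ∧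
      (vhat (d, khat) + (Pihat - Piminus)) - v (d, khat) ≤ Piv - Piminus := by
  have key : ∑ p ∈ Mhat, (c p.2 - v p)
      = ∑ p ∈ Mhat, (c p.2 - vhat p) + (vhat (d, khat) - v (d, khat)) := by
    have hsplit : ∑ p ∈ Mhat, ((c p.2 - v p) - (c p.2 - vhat p))
        = vhat (d, khat) - v (d, khat) := by
      rw [Finset.sum_eq_single (d, khat)]
      · ring
      · intro p hp hne
        have hp1 : p.1 ≠ d := by
          intro h
          exact hne (hMhat p hp (d, khat) hdk (Or.inl h))
        rw [hagree p hp1]; ring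
      · intro h; exact absurd hdk h
    have := Finset.sum_sub_distrib (s := Mhat)
      (f := fun p : D × K => c p.2 - v p) (g := fun p => c p.2 - vhat p)
    linarith [hsplit, this]
  have h1 : vhat (d, khat) + Pihat - v (d, khat) ≤ Piv := by
    have := hv_ub Mhat hMhat
    rw [key, hhat_att] at this
    linarith
  exact ⟨h1, by linarith⟩
end

section
/- (Individual Rationality of the RBC-MST mechanism.) Let a winning driver have distance l ≥ 0, valid truthful bid B with α ≤ B ≤ b̄, and arbitrary reals Ψ (the optimal objective with all drivers) and Ψ⁻ (the optimal objective with this driver removed). Define the payment p = v̄ if Ψ⁻ < Ψ, and p = min{ v(B,l) + (Ψ⁻ − Ψ), v̄ } if Ψ⁻ ≥ Ψ, where v̄ = C + b̄·l + s(b̄,l). Then p ≥ v(B,l); that is, the driver's utility p − v(B,l) is nonnegative, so no eligible driver who submits a bid incurs negative utility. -/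
/-- Compensating function `s(B,l) = max{v̲(l) − ṽ(B,l), 0}`. -/
noncomputable def sComp (α μ C l₀ B l : ℝ) : ℝ :=
  max (vLow α μ l₀ l - vStated C B l) 0

/-- Adjusted (true) valuation `v(B,l) = ṽ(B,l) + s(B,l)`. -/
noncomputable def vAdj (α μ C l₀ B l : ℝ) : ℝ :=
  vStated C B l + sComp α μ C l₀ B l

/-- Individual Rationality of RBC-MST: a winning driver with distance
`l ≥ 0` and valid truthful bid `α ≤ B ≤ b̄` receives a payment `p` (defined via the
RBC-MST payment rule with `v̄ = C + b̄·l + s(b̄,l)`) with `p ≥ v(B,l)`, so the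
driver's utility `p − v(B,l)` is nonnegative. -/
theorem stmt_11 (α μ C l₀ bbar B l Ψ Ψminus : ℝ)
    (hα : 0 < α) (hμ : 0 < μ) (hC : 0 < C) (hl₀ : 0 < l₀) (hbar : α ≤ bbar)
    (hB₁ : α ≤ B) (hB₂ : B ≤ bbar) (hl : 0 ≤ l)
    (p : ℝ)
    (hp : p = if Ψminus < Ψ then C + bbar * l + sComp α μ C l₀ bbar l
      else min (vAdj α μ C l₀ B l + (Ψminus - Ψ))
        (C + bbar * l + sComp α μ C l₀ bbar l)) :
    vAdj α μ C l₀ B l ≤ p := by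
  have key : ∀ b : ℝ, vAdj α μ C l₀ b l = max (vLow α μ l₀ l) (vStated C b l) := by
    intro b
    unfold vAdj sComp
    rw [max_comm, ← max_add_add_left]
    ring_nf
    exact max_comm _ _
  have hmono : vAdj α μ C l₀ B l ≤ C + bbar * l + sComp α μ C l₀ bbar l := by
    have : C + bbar * l + sComp α μ C l₀ bbar l = vAdj α μ C l₀ bbar l := by
      unfold vAdj vStated; ring
    rw [this, key B, key bbar]
    exact max_le_max le_rfl (by
      unfold vStated
      nlinarith [mul_le_mul_of_nonneg_right hB₂ hl])
  rw [hp]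
  split_ifs with h
  · exact hmono
  · exact le_min (by linarith [not_lt.mp h]) hmono
end

section
/- (Core inequality for Incentive Compatibility of the RBC-MST mechanism, selected case.) Let 𝓜 be a nonempty finite collection of matchings between D and K, and for w : D × K → ℝ let Ψ(w) = min over M ∈ 𝓜 of ∑_{(d,k)∈M} w(d,k). Fix a driver d and suppose the reported valuation v̂ agrees with the true valuation v on every pair whose driver is not d. If M̂ ∈ 𝓜 attains Ψ(v̂) and (d,k) ∈ M̂, then Ψ(v) ≤ Ψ(v̂) + v(d,k) − v̂(d,k). Consequently, for any real Ψ⁻ (the optimal objective without driver d, which does not depend on d's report), the misreport utility v̂(d,k) + (Ψ⁻ − Ψ(v̂)) − v(d,k) is at most the truthful utility Ψ⁻ − Ψ(v). -/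
/-- Core inequality for IC of RBC-MST, selected case: Let `𝓜` be a
nonempty finite collection of matchings and `Ψ(w) = min_{M ∈ 𝓜} ∑_{(d,k)∈M} w(d,k)`.
If the report `v̂` agrees with the truth `v` off driver `d`, `M̂ ∈ 𝓜` attains
`Ψ(v̂)`, and `(d,k) ∈ M̂`, then `Ψ(v) ≤ Ψ(v̂) + v(d,k) − v̂(d,k)`; consequently for
any `Ψ⁻`, the misreport utility `v̂(d,k) + (Ψ⁻ − Ψ(v̂)) − v(d,k)` is at most the
truthful utility `Ψ⁻ − Ψ(v)`. -/
theorem stmt_13 {D K : Type*} [Fintype D] [Fintype K]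
    (𝓜 : Finset (Finset (D × K))) (h𝓜 : 𝓜.Nonempty)
    (hmatch : ∀ M ∈ 𝓜, IsMatching M)
    (v vhat : D × K → ℝ) (d : D) (k : K)
    (hagree : ∀ p : D × K, p.1 ≠ d → vhat p = v p)
    (Mhat : Finset (D × K)) (hMhatmem : Mhat ∈ 𝓜) (hdk : (d, k) ∈ Mhat)
    (Ψhat Ψv : ℝ)
    (hhat_att : ∑ p ∈ Mhat, vhat p = Ψhat)
    (hhat_lb : ∀ M ∈ 𝓜, Ψhat ≤ ∑ p ∈ M, vhat p)
    (hv_lb : ∀ M ∈ 𝓜, Ψv ≤ ∑ p ∈ M, v p)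
    (hv_att : ∃ M ∈ 𝓜, ∑ p ∈ M, v p = Ψv) :
    Ψv ≤ Ψhat + v (d, k) - vhat (d, k) ∧
      ∀ Ψminus : ℝ, vhat (d, k) + (Ψminus - Ψhat) - v (d, k) ≤ Ψminus - Ψv := by
  classical
  have herase : ∀ p ∈ Mhat.erase (d, k), vhat p = v p := by
    intro p hp
    rcases Finset.mem_erase.mp hp with ⟨hne, hpM⟩
    apply hagree
    intro hp1
    exact hne (hmatch Mhat hMhatmem p hpM (d, k) hdk (Or.inl hp1))
  have hsumv : ∑ p ∈ Mhat, v p = v (d, k) + ∑ p ∈ Mhat.erase (d, k), v p :=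
    (Finset.add_sum_erase Mhat v hdk).symm
  have hsumvh : ∑ p ∈ Mhat, vhat p = vhat (d, k) + ∑ p ∈ Mhat.erase (d, k), vhat p :=
    (Finset.add_sum_erase Mhat vhat hdk).symm
  have heq : ∑ p ∈ Mhat.erase (d, k), vhat p = ∑ p ∈ Mhat.erase (d, k), v p :=
    Finset.sum_congr rfl herase
  have h1 : Ψv ≤ Ψhat + v (d, k) - vhat (d, k) := by
    have := hv_lb Mhat hMhatmem
    rw [hsumv, ← heq] at this
    linarith [hsumvh, hhat_att]
  exact ⟨h1, fun Ψminus => by linarith⟩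
end
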